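/- arXiv:1411.1340 — 5 statements merged into one kernel-verified Lean document; each statement's English description precedes it below -/
import Mathlib

section
/- Let V : ℝ^d → ℝ be a C^1 function such that b := -∇V satisfies the one-sided Lipschitz condition (b(x)-b(y), x-y) ≤ λ|x-y|² for all x,y and some λ ≥ 0, and suppose x ↦ exp(-V(x)) is integrable on ℝ^d. Then for every nonzero vector v ∈ ℝ^d there exists z ∈ ℝ^d such that V(z) < (V(z+v) + V(z-v))/2. -/
/-!
If `V (z + v) + V (z - v) ≤ 2 V z` for every `z`, then along each line `x + ℕ v` the sequence
`V (x + n v)` is concave, so it stays below `V x` in one of the two directions `±v`. On the unit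
ball `K`, where `V ≤ M`, this gives `∫_K e^{-V(x + n v)} + ∫_K e^{-V(x - n v)} ≥ e^{-M} |K| > 0`
for every `n`, whereas the mass of the integrable function `e^{-V}` on the far translates `K ± n v`
tends to `0`.
-/

open MeasureTheory Filter Topology

theorem antitone_of_add_le_two_mul {u : ℕ → ℝ} (h : ∀ n, u (n + 2) + u n ≤ 2 * u (n + 1))
    (h₀ : u 1 ≤ u 0) : Antitone u := by
  refine antitone_nat_of_succ_le fun n => ?_
  induction n with
  | zero => exact h₀
  | succ n ih => linarith [h n]

section MidpointConcaveAlong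

variable {E : Type*} [AddCommGroup E] {f : E → ℝ} {v : E}

theorem apply_add_nsmul_le_of_apply_add_le (h : ∀ z, f (z + v) + f (z - v) ≤ 2 * f z) {x : E}
    (hx : f (x + v) ≤ f x) (n : ℕ) : f (x + n • v) ≤ f x := by
  have hanti : Antitone fun n : ℕ => f (x + n • v) := by
    refine antitone_of_add_le_two_mul (fun n => ?_) (by simpa using hx)
    convert h (x + (n + 1) • v) using 3 <;> simp only [add_nsmul, one_nsmul] <;> abel
  simpa using hanti (Nat.zero_le n)

theorem apply_add_nsmul_le_or_apply_add_nsmul_neg_le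
    (h : ∀ z, f (z + v) + f (z - v) ≤ 2 * f z) (x : E) :
    (∀ n : ℕ, f (x + n • v) ≤ f x) ∨ ∀ n : ℕ, f (x + n • -v) ≤ f x := by
  rcases le_total (f (x + v)) (f x) with hle | hle
  · exact .inl (apply_add_nsmul_le_of_apply_add_le h hle)
  · refine .inr (apply_add_nsmul_le_of_apply_add_le (fun z => ?_) ?_)
    · simpa [← sub_eq_add_neg, add_comm] using h z
    · rw [← sub_eq_add_neg]
      linarith [h x]

end MidpointConcaveAlong

theorem tendsto_nsmul_cocompact {E : Type*} [NormedAddCommGroup E] [NormedSpace ℝ E]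
    [ProperSpace E] {v : E} (hv : v ≠ 0) :
    Tendsto (fun n : ℕ => n • v) atTop (cocompact E) := by
  rw [← Metric.cobounded_eq_cocompact, ← tendsto_norm_atTop_iff_cobounded]
  simp only [RCLike.norm_nsmul ℝ, nsmul_eq_mul]
  exact tendsto_natCast_atTop_atTop.atTop_mul_const (norm_pos_iff.2 hv)

theorem tendsto_setIntegral_comp_add_right_of_tendsto_cocompact {G : Type*} [TopologicalSpace G]
    [AddGroup G] [IsTopologicalAddGroup G] [T2Space G] [MeasurableSpace G] [BorelSpace G]
    {μ : Measure G} [μ.IsAddRightInvariant] {g : G → ℝ} (hg : Integrable g μ) {K : Set G}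
    (hK : IsCompact K) {ι : Type*} {l : Filter ι} [l.IsCountablyGenerated] {a : ι → G}
    (ha : Tendsto a l (cocompact G)) :
    Tendsto (fun i => ∫ x in K, g (x + a i) ∂μ) l (𝓝 0) := by
  have htranslate (b : G) :
      ∫ x in K, g (x + b) ∂μ = ∫ y, ((· - b) ⁻¹' K).indicator g y ∂μ := by
    rw [integral_indicator ((hK.measurableSet).preimage (measurable_sub_const b)),
      ← (measurePreserving_add_right μ b).setIntegral_preimage_emb
        (measurableEmbedding_addRight b) g]
    simp [Set.preimage_preimage]
  simp only [htranslate]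
  rw [← integral_zero G ℝ]
  refine tendsto_integral_filter_of_dominated_convergence (‖g ·‖) ?_ ?_ hg.norm ?_
  · exact .of_forall fun i => (hg.indicator
      ((hK.measurableSet).preimage (measurable_sub_const (a i)))).aestronglyMeasurable
  · exact .of_forall fun i => .of_forall fun y => norm_indicator_le_norm_self g y
  · refine .of_forall fun y => tendsto_const_nhds.congr' ?_
    filter_upwards [ha ((Homeomorph.subLeft y).isCompact_preimage.2 hK).compl_mem_cocompact]
      with i hi
    simp_all

theorem exists_lt_midpoint_of_integrable_exp_neg {E : Type*} [NormedAddCommGroup E]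
    [NormedSpace ℝ E] [ProperSpace E] [MeasurableSpace E] [BorelSpace E] {μ : Measure E}
    [μ.IsAddRightInvariant] [μ.IsOpenPosMeasure] [IsFiniteMeasureOnCompacts μ] {V : E → ℝ}
    (hV : Continuous V) (hint : Integrable (fun x => Real.exp (-V x)) μ) {v : E} (hv : v ≠ 0) :
    ∃ z, V z < (V (z + v) + V (z - v)) / 2 := by
  by_contra! hcon
  have hconc (z : E) : V (z + v) + V (z - v) ≤ 2 * V z := by linarith [hcon z]
  set K := Metric.closedBall (0 : E) 1
  have hK : IsCompact K := isCompact_closedBall 0 1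
  obtain ⟨M, hM⟩ := hK.bddAbove_image hV.continuousOn
  have hlower (n : ℕ) : μ.real K * Real.exp (-M) ≤
      ∫ x in K, Real.exp (-V (x + n • v)) ∂μ + ∫ x in K, Real.exp (-V (x + n • -v)) ∂μ := by
    rw [← integral_add (hint.comp_add_right _).integrableOn (hint.comp_add_right _).integrableOn,
      ← smul_eq_mul, ← setIntegral_const]
    refine setIntegral_mono_on (integrableOn_const measure_closedBall_lt_top.ne)
      (((hint.comp_add_right _).add (hint.comp_add_right _)).integrableOn)
      measurableSet_closedBall fun x hx => ?_
    have hVx : V x ≤ M := hM ⟨x, hx, rfl⟩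
    rcases apply_add_nsmul_le_or_apply_add_nsmul_neg_le hconc x with h | h
    · have := Real.exp_le_exp.2 (neg_le_neg (h n |>.trans hVx))
      linarith [Real.exp_pos (-V (x + n • -v))]
    · have := Real.exp_le_exp.2 (neg_le_neg (h n |>.trans hVx))
      linarith [Real.exp_pos (-V (x + n • v))]
  have hlim := (tendsto_setIntegral_comp_add_right_of_tendsto_cocompact hint hK
      (tendsto_nsmul_cocompact hv)).add
    (tendsto_setIntegral_comp_add_right_of_tendsto_cocompact hint hK
      (tendsto_nsmul_cocompact (neg_ne_zero.2 hv)))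
  rw [add_zero] at hlim
  have hpos : 0 < μ.real K * Real.exp (-M) :=
    mul_pos (ENNReal.toReal_pos (Metric.measure_closedBall_pos μ 0 one_pos).ne'
      measure_closedBall_lt_top.ne) (Real.exp_pos _)
  linarith [ge_of_tendsto' hlim hlower]

theorem stmt0_general {d : ℕ} (V : EuclideanSpace ℝ (Fin d) → ℝ)
    (hV : ContDiff ℝ 1 V)
    (hint : Integrable (fun x => Real.exp (-V x))
      (volume : Measure (EuclideanSpace ℝ (Fin d)))) :
    ∀ v : EuclideanSpace ℝ (Fin d), v ≠ 0 →
      ∃ z : EuclideanSpace ℝ (Fin d), V z < (V (z + v) + V (z - v)) / 2 :=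
  fun _ hv => exists_lt_midpoint_of_integrable_exp_neg hV.continuous hint hv

theorem stmt0 {d : ℕ} (V : EuclideanSpace ℝ (Fin d) → ℝ) (lam : ℝ)
    (hV : ContDiff ℝ 1 V) (hlam : 0 ≤ lam)
    (hb : ∀ x y : EuclideanSpace ℝ (Fin d),
      (inner ℝ ((-gradient V x) - (-gradient V y)) (x - y) : ℝ) ≤ lam * ‖x - y‖ ^ 2)
    (hint : Integrable (fun x => Real.exp (-V x))
      (volume : Measure (EuclideanSpace ℝ (Fin d)))) :
    ∀ v : EuclideanSpace ℝ (Fin d), v ≠ 0 →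
      ∃ z : EuclideanSpace ℝ (Fin d), V z < (V (z + v) + V (z - v)) / 2 :=
  stmt0_general V hV hint
end

section
/- Let b : ℝ^d → ℝ^d be continuous and eventually strictly monotone: there exist R > 0 and λ₁ > 0 such that (b(x) - b(y), x - y) ≤ -λ₁|x-y|² whenever |x| > R and |y| > R. Then there exist constants c > 0 and C > 0 such that (b(x), x) ≤ -c|x|² + C for all x ∈ ℝ^d. -/
/-!
Compare `x` with the point `y` of norm `ρ = 2R` on the ray through `x`. Since `x - y` is a
positive multiple `t • x` of `x`, strong monotonicity between `x` and `y` gives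
`⟪b x, x⟫ ≤ ⟪b y, x⟫ - λ t ‖x‖²`, and `t ≥ 1/2` once `‖x‖ ≥ 2ρ`. With `M` a bound for `‖b‖` on a
ball, this yields `⟪b x, x⟫ ≤ M ‖x‖ - (λ/2) ‖x‖² + const` everywhere, and the linear term is
absorbed by `M ‖x‖ ≤ (λ/4) ‖x‖² + M² / λ`.
-/

open RealInnerProductSpace

variable {E : Type*} [NormedAddCommGroup E] [InnerProductSpace ℝ E]

lemma inner_apply_self_le_of_inner_le_smul {b : E → E} {lam s : ℝ} {x : E} (hs : s < 1)
    (hmon : ⟪b x - b (s • x), x - s • x⟫ ≤ -lam * ‖x - s • x‖ ^ 2) :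
    ⟪b x, x⟫ ≤ ⟪b (s • x), x⟫ - lam * (1 - s) * ‖x‖ ^ 2 := by
  have hxy : x - s • x = (1 - s) • x := by rw [sub_smul, one_smul]
  rw [hxy, real_inner_smul_right, inner_sub_left, norm_smul, Real.norm_of_nonneg (by linarith),
    mul_pow] at hmon
  nlinarith

lemma inner_apply_self_le_of_two_mul_le_norm {b : E → E} {R lam ρ M : ℝ}
    (hmon : ∀ x y : E, R < ‖x‖ → R < ‖y‖ → ⟪b x - b y, x - y⟫ ≤ -lam * ‖x - y‖ ^ 2)
    (hlam : 0 ≤ lam) (hρ : 0 < ρ) (hRρ : R < ρ) (hM : ∀ y : E, ‖y‖ = ρ → ‖b y‖ ≤ M)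
    {x : E} (hx : 2 * ρ ≤ ‖x‖) :
    ⟪b x, x⟫ ≤ M * ‖x‖ - lam / 2 * ‖x‖ ^ 2 := by
  have hx0 : 0 < ‖x‖ := by linarith
  set s := ρ / ‖x‖
  have hs : s ≤ 1 / 2 := by rw [div_le_iff₀ hx0]; linarith
  have hsx : ‖s • x‖ = ρ := by
    rw [norm_smul, Real.norm_of_nonneg (by positivity), div_mul_cancel₀ _ hx0.ne']
  have hray := inner_apply_self_le_of_inner_le_smul (by linarith)
    (hmon x (s • x) (by linarith) (by linarith))
  have hby : ⟪b (s • x), x⟫ ≤ M * ‖x‖ :=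
    (real_inner_le_norm _ _).trans (mul_le_mul_of_nonneg_right (hM _ hsx) hx0.le)
  have hdecay : lam / 2 * ‖x‖ ^ 2 ≤ lam * (1 - s) * ‖x‖ ^ 2 := by gcongr; nlinarith
  linarith

lemma inner_apply_self_le_of_dissipative_outside {b : E → E} {R lam ρ M : ℝ}
    (hmon : ∀ x y : E, R < ‖x‖ → R < ‖y‖ → ⟪b x - b y, x - y⟫ ≤ -lam * ‖x - y‖ ^ 2)
    (hlam : 0 ≤ lam) (hρ : 0 < ρ) (hRρ : R < ρ) (hM : ∀ y : E, ‖y‖ ≤ 2 * ρ → ‖b y‖ ≤ M)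
    (x : E) :
    ⟪b x, x⟫ ≤ M * ‖x‖ - lam / 2 * ‖x‖ ^ 2 + 2 * lam * ρ ^ 2 := by
  rcases le_or_gt (2 * ρ) ‖x‖ with hx | hx
  · have := inner_apply_self_le_of_two_mul_le_norm hmon hlam hρ hRρ
      (fun y hy => hM y (by linarith)) hx
    nlinarith
  · have hbx : ⟪b x, x⟫ ≤ M * ‖x‖ :=
      (real_inner_le_norm _ _).trans (mul_le_mul_of_nonneg_right (hM x hx.le) (norm_nonneg x))
    have hsq : ‖x‖ ^ 2 ≤ (2 * ρ) ^ 2 := by gcongr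
    nlinarith

lemma mul_le_quarter_mul_sq_add_sq_div {lam : ℝ} (hlam : 0 < lam) (M n : ℝ) :
    M * n ≤ lam / 4 * n ^ 2 + M ^ 2 / lam := by
  have h := two_mul_le_add_sq (lam / 2 * n) M
  have : M * n * lam ≤ (lam / 4 * n ^ 2 + M ^ 2 / lam) * lam := by
    rw [add_mul, div_mul_cancel₀ _ hlam.ne']; nlinarith
  exact le_of_mul_le_mul_right this hlam

theorem stmt2 {d : ℕ} (b : EuclideanSpace ℝ (Fin d) → EuclideanSpace ℝ (Fin d))
    (hb : Continuous b) (R lam₁ : ℝ) (hR : 0 < R) (hlam : 0 < lam₁)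
    (hmon : ∀ x y : EuclideanSpace ℝ (Fin d), R < ‖x‖ → R < ‖y‖ →
      (inner ℝ (b x - b y) (x - y) : ℝ) ≤ -lam₁ * ‖x - y‖ ^ 2) :
    ∃ c > (0 : ℝ), ∃ C > (0 : ℝ), ∀ x : EuclideanSpace ℝ (Fin d),
      (inner ℝ (b x) x : ℝ) ≤ -c * ‖x‖ ^ 2 + C := by
  obtain ⟨M, hM⟩ := (isCompact_closedBall (0 : EuclideanSpace ℝ (Fin d))
    (2 * (2 * R))).exists_bound_of_continuousOn hb.continuousOn
  have hM' (y : EuclideanSpace ℝ (Fin d)) (hy : ‖y‖ ≤ 2 * (2 * R)) : ‖b y‖ ≤ M :=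
    hM y (mem_closedBall_zero_iff.mpr hy)
  refine ⟨lam₁ / 4, by positivity, M ^ 2 / lam₁ + 2 * lam₁ * (2 * R) ^ 2, by positivity,
    fun x => ?_⟩
  have := inner_apply_self_le_of_dissipative_outside hmon hlam.le (by linarith) (by linarith)
    hM' x
  have := mul_le_quarter_mul_sq_add_sq_div hlam M ‖x‖
  linarith
end

section
/- Let g : [0,∞) → ℝ be C² and convex, d ≥ 2, and suppose x ↦ e^{-g(|x|²)} is integrable on ℝ^d. Then ∫_{ℝ^d} g'(|x|²) e^{-g(|x|²)} dx > 0. -/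
/-!
If `g' ≤ 0` on `[0, ∞)`, then `g` is antitone there and the integrand `e^{-g(|x|²)}` is bounded
below by `e^{-g(0)}`, which is not integrable. So `g'(t₀) > 0` for some `t₀ ≥ 0`, and convexity
gives `g(t) ≥ g(t₀) + g'(t₀)(t - t₀)` and `g'(t) ≥ g'(t₀)` for `t ≥ t₀`: `e^{-g(r²)}` has Gaussian
decay and `g'(r²)` is eventually positive.

Write `d = m + 2`. In polar coordinates the integral is a positive multiple of
`∫₀^∞ r^{m+1} g'(r²) e^{-g(r²)} dr`, and
`r^{m+1} g'(r²) e^{-g(r²)} = -½ (r^m e^{-g(r²)})' + (m/2) r^{m-1} e^{-g(r²)}`,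
so this integral equals `½ 0^m e^{-g(0)} + (m/2) ∫₀^∞ r^{m-1} e^{-g(r²)} dr > 0`.
-/

open MeasureTheory Real Set Filter Topology Asymptotics

lemma ConvexOn.add_deriv_mul_sub_le {S : Set ℝ} {f : ℝ → ℝ} {x y : ℝ} (hf : ConvexOn ℝ S f)
    (hx : x ∈ S) (hy : y ∈ S) (hfx : DifferentiableAt ℝ f x) :
    f x + deriv f x * (y - x) ≤ f y := by
  rcases lt_trichotomy x y with hxy | rfl | hxy
  · have h := hf.deriv_le_slope hx hy hxy hfx
    rw [slope_def_field, le_div_iff₀ (sub_pos.2 hxy)] at h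
    linarith
  · simp
  · have h := hf.slope_le_deriv hy hx hxy hfx
    rw [slope_def_field, div_le_iff₀ (sub_pos.2 hxy)] at h
    linarith

lemma exists_deriv_pos_of_integrable_exp_neg_comp_norm_sq {E : Type*} [NormedAddCommGroup E]
    [NormedSpace ℝ E] [Nontrivial E] [FiniteDimensional ℝ E] [MeasurableSpace E] [BorelSpace E]
    (μ : Measure E) [μ.IsAddHaarMeasure] {g : ℝ → ℝ} (hg : Differentiable ℝ g)
    (hint : Integrable (fun x : E => exp (-g (‖x‖ ^ 2))) μ) : ∃ t, 0 ≤ t ∧ 0 < deriv g t := by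
  by_contra! hneg
  have hanti : AntitoneOn g (Ici 0) :=
    antitoneOn_of_deriv_nonpos (convex_Ici 0) hg.continuous.continuousOn hg.differentiableOn
      fun t ht => hneg t (interior_subset ht)
  -- `exp (-g 0)` is a positive lower bound of the integrand, and `μ` has infinite mass.
  have hconst : Integrable (fun _ : E => exp (-g 0)) μ :=
    hint.mono' aestronglyMeasurable_const <| ae_of_all _ fun x => by
      rw [norm_of_nonneg (exp_pos _).le]
      exact exp_le_exp.2 <| neg_le_neg <|
        hanti self_mem_Ici (mem_Ici.2 (sq_nonneg ‖x‖)) (sq_nonneg ‖x‖)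
  rcases integrable_const_iff.1 hconst with h | h
  · exact (exp_pos _).ne' h
  · exact measure_ne_top μ univ (measure_univ_of_isAddLeftInvariant μ)

lemma isBigO_exp_neg_comp_sq_of_le {g : ℝ → ℝ} {a c t₀ : ℝ} (h : ∀ t, t₀ ≤ t → a + c * t ≤ g t) :
    (fun r => exp (-g (r ^ 2))) =O[atTop] fun r => exp (-c * r ^ 2) := by
  refine IsBigO.of_bound (exp (-a)) ?_
  filter_upwards [(tendsto_pow_atTop two_ne_zero).eventually_ge_atTop t₀] with r hr
  rw [norm_of_nonneg (exp_pos _).le, norm_of_nonneg (exp_pos _).le, ← exp_add]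
  exact exp_le_exp.2 (by linarith [h _ hr])

section GaussianDecay

variable {φ : ℝ → ℝ} {c : ℝ}

lemma isBigO_pow_mul_of_isBigO_exp_neg_mul_sq (hc : 0 < c)
    (hφ : φ =O[atTop] fun r => exp (-c * r ^ 2)) (n : ℕ) :
    (fun r => r ^ n * φ r) =O[atTop] fun r => exp (-(1 / 2) * r) := by
  have h := (rpow_mul_exp_neg_mul_sq_isLittleO_exp_neg hc n).isBigO
  simp only [rpow_natCast] at h
  exact ((isBigO_refl (fun r : ℝ => r ^ n) atTop).mul hφ).trans h

lemma integrableOn_Ioi_pow_mul_of_isBigO_exp_neg_mul_sq (hc : 0 < c)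
    (hφ : φ =O[atTop] fun r => exp (-c * r ^ 2)) (hφc : Continuous φ) (n : ℕ) (a : ℝ) :
    IntegrableOn (fun r => r ^ n * φ r) (Ioi a) :=
  integrable_of_isBigO_exp_neg one_half_pos ((continuous_pow n).mul hφc).continuousOn
    (isBigO_pow_mul_of_isBigO_exp_neg_mul_sq hc hφ n)

lemma tendsto_pow_mul_of_isBigO_exp_neg_mul_sq (hc : 0 < c)
    (hφ : φ =O[atTop] fun r => exp (-c * r ^ 2)) (n : ℕ) :
    Tendsto (fun r => r ^ n * φ r) atTop (𝓝 0) :=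
  (isBigO_pow_mul_of_isBigO_exp_neg_mul_sq hc hφ n).trans_tendsto <|
    tendsto_exp_comp_nhds_zero.2 <| tendsto_id.const_mul_atTop_of_neg (by norm_num)

end GaussianDecay

lemma integrableOn_Ioi_of_hasDerivAt_sub {F f h : ℝ → ℝ} {a l : ℝ}
    (hF : ∀ x ∈ Ici a, HasDerivAt F (f x - h x) x) (hf : Continuous f)
    (hf_nonneg : ∀ᶠ x in atTop, 0 ≤ f x) (hh : Continuous h) (hh_int : IntegrableOn h (Ioi a))
    (hlim : Tendsto F atTop (𝓝 l)) : IntegrableOn f (Ioi a) := by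
  obtain ⟨R, hR⟩ := eventually_atTop.1 (hf_nonneg.and (eventually_ge_atTop a))
  -- Beyond `R`, `f` is the nonnegative derivative of `F + ∫ h`, which has a limit.
  have htail : IntegrableOn f (Ioi R) := by
    refine integrableOn_Ioi_deriv_of_nonneg' (g := fun x => F x + ∫ t in a..x, h t)
      (fun x hx => ?_) (fun x hx => (hR x hx.out.le).1)
      (hlim.add (intervalIntegral_tendsto_integral_Ioi a hh_int tendsto_id))
    exact ((hF x ((hR R le_rfl).2.trans hx)).add
      (hh.integral_hasStrictDerivAt a x).hasDerivAt).congr_deriv (sub_add_cancel _ _)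
  rw [← Ioc_union_Ioi_eq_Ioi (hR R le_rfl).2, integrableOn_union]
  exact ⟨hf.integrableOn_Ioc, htail⟩

section Radial

variable {g : ℝ → ℝ}

lemma hasDerivAt_exp_neg_comp_sq {r : ℝ} (hg : DifferentiableAt ℝ g (r ^ 2)) :
    HasDerivAt (fun s => exp (-g (s ^ 2))) (-(2 * r * deriv g (r ^ 2)) * exp (-g (r ^ 2))) r := by
  have h := HasDerivAt.comp (h := fun s : ℝ => s ^ 2) r hg.hasDerivAt (hasDerivAt_pow 2 r)
  exact h.neg.exp.congr_deriv (by simp; ring)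

-- For `m = 0` the truncated exponent `m - 1 = 0` is harmless: its coefficient `m / 2` vanishes.
lemma hasDerivAt_pow_mul_exp_neg_comp_sq (m : ℕ) {r : ℝ} (hg : DifferentiableAt ℝ g (r ^ 2)) :
    HasDerivAt (fun s => -(s ^ m * exp (-g (s ^ 2))) / 2)
      (r ^ (m + 1) * (deriv g (r ^ 2) * exp (-g (r ^ 2)))
        - m / 2 * (r ^ (m - 1) * exp (-g (r ^ 2)))) r :=
  (((hasDerivAt_pow m r).mul (hasDerivAt_exp_neg_comp_sq hg)).neg.div_const 2).congr_deriv
    (by ring)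

variable (m : ℕ) {c : ℝ}

lemma integral_Ioi_pow_succ_mul_deriv_mul_exp_neg_comp_sq (hg : ContDiff ℝ 1 g) (hc : 0 < c)
    (hdecay : (fun r => exp (-g (r ^ 2))) =O[atTop] fun r => exp (-c * r ^ 2))
    (hmono : ∀ᶠ r in atTop, 0 ≤ deriv g (r ^ 2)) :
    ∫ r in Ioi 0, r ^ (m + 1) * (deriv g (r ^ 2) * exp (-g (r ^ 2))) =
      0 ^ m * exp (-g 0) / 2 + m / 2 * ∫ r in Ioi 0, r ^ (m - 1) * exp (-g (r ^ 2)) := by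
  have hgd := hg.differentiable one_ne_zero
  have hg' := hg.continuous_deriv le_rfl
  have hφ : Continuous fun r => exp (-g (r ^ 2)) := by fun_prop
  have hderiv : ∀ r ∈ Ici (0 : ℝ), HasDerivAt _ _ r :=
    fun r _ => hasDerivAt_pow_mul_exp_neg_comp_sq m (hgd (r ^ 2))
  have hB : IntegrableOn (fun r => m / 2 * (r ^ (m - 1) * exp (-g (r ^ 2)))) (Ioi 0) :=
    (integrableOn_Ioi_pow_mul_of_isBigO_exp_neg_mul_sq hc hdecay hφ _ _).const_mul _
  have hlim : Tendsto (fun s => -(s ^ m * exp (-g (s ^ 2))) / 2) atTop (𝓝 0) := by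
    simpa using (tendsto_pow_mul_of_isBigO_exp_neg_mul_sq hc hdecay m).neg.div_const 2
  have hA :
      IntegrableOn (fun r => r ^ (m + 1) * (deriv g (r ^ 2) * exp (-g (r ^ 2)))) (Ioi 0) := by
    refine integrableOn_Ioi_of_hasDerivAt_sub hderiv (by fun_prop) ?_ (by fun_prop) hB hlim
    filter_upwards [hmono, eventually_ge_atTop 0] with r hr hr₀
    positivity
  have h := integral_Ioi_of_hasDerivAt_of_tendsto' hderiv (hA.sub hB) hlim
  rw [integral_sub hA hB, integral_const_mul] at h
  linarith

lemma integral_Ioi_pow_succ_mul_deriv_mul_exp_neg_comp_sq_pos (hg : ContDiff ℝ 1 g) (hc : 0 < c)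
    (hdecay : (fun r => exp (-g (r ^ 2))) =O[atTop] fun r => exp (-c * r ^ 2))
    (hmono : ∀ᶠ r in atTop, 0 ≤ deriv g (r ^ 2)) :
    0 < ∫ r in Ioi 0, r ^ (m + 1) * (deriv g (r ^ 2) * exp (-g (r ^ 2))) := by
  rw [integral_Ioi_pow_succ_mul_deriv_mul_exp_neg_comp_sq m hg hc hdecay hmono]
  rcases m.eq_zero_or_pos with rfl | hm
  · simp only [pow_zero, one_mul, CharP.cast_eq_zero, zero_div, zero_mul, add_zero]
    positivity
  have hpos : ∀ r ∈ Ioi (0 : ℝ), 0 < r ^ (m - 1) * exp (-g (r ^ 2)) :=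
    fun r hr => by have : (0 : ℝ) < r := hr; positivity
  have hM : 0 < ∫ r in Ioi 0, r ^ (m - 1) * exp (-g (r ^ 2)) := by
    rw [setIntegral_pos_iff_support_of_nonneg_ae
      ((ae_restrict_iff' measurableSet_Ioi).2 (ae_of_all _ fun r hr => (hpos r hr).le))
      (integrableOn_Ioi_pow_mul_of_isBigO_exp_neg_mul_sq hc hdecay (by fun_prop) _ _),
      inter_eq_right.2 fun r hr => Function.mem_support.2 (hpos r hr).ne', volume_Ioi]
    exact ENNReal.zero_lt_top
  rw [zero_pow hm.ne', zero_mul, zero_div, zero_add]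
  positivity

end Radial

theorem stmt8 {d : ℕ} (hd : 2 ≤ d) (g : ℝ → ℝ) (hg : ContDiff ℝ 2 g)
    (hconv : ConvexOn ℝ (Set.Ici (0 : ℝ)) g)
    (hint : Integrable (fun x : EuclideanSpace ℝ (Fin d) => Real.exp (-g (‖x‖ ^ 2)))
      (volume : Measure (EuclideanSpace ℝ (Fin d)))) :
    0 < ∫ x : EuclideanSpace ℝ (Fin d), deriv g (‖x‖ ^ 2) * Real.exp (-g (‖x‖ ^ 2)) := by
  obtain ⟨m, rfl⟩ : ∃ m, d = m + 2 := ⟨d - 2, by omega⟩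
  have hg₁ : ContDiff ℝ 1 g := hg.of_le (by norm_num)
  have hgd := hg₁.differentiable one_ne_zero
  obtain ⟨t₀, ht₀, hc⟩ := exists_deriv_pos_of_integrable_exp_neg_comp_norm_sq volume hgd hint
  have htangent : ∀ t, t₀ ≤ t → g t₀ - deriv g t₀ * t₀ + deriv g t₀ * t ≤ g t := fun t ht => by
    linarith [hconv.add_deriv_mul_sub_le ht₀ (mem_Ici.2 (ht₀.trans ht)) (hgd t₀)]
  have hdecay := isBigO_exp_neg_comp_sq_of_le htangent
  have hmono : ∀ᶠ r in atTop, 0 ≤ deriv g (r ^ 2) := by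
    filter_upwards [(tendsto_pow_atTop two_ne_zero).eventually_ge_atTop t₀] with r hr
    exact hc.le.trans <| hconv.monotoneOn_deriv (fun x _ => hgd x) ht₀
      (mem_Ici.2 (ht₀.trans hr)) hr
  have hball : 0 < (volume (Metric.ball (0 : EuclideanSpace ℝ (Fin (m + 2))) 1)).toReal :=
    ENNReal.toReal_pos (Metric.measure_ball_pos _ _ one_pos).ne' measure_ball_lt_top.ne
  have hradial := integral_Ioi_pow_succ_mul_deriv_mul_exp_neg_comp_sq_pos m hg₁ hc hdecay hmono
  rw [integral_fun_norm_addHaar volume fun r => deriv g (r ^ 2) * exp (-g (r ^ 2)),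
    finrank_euclideanSpace_fin]
  simp only [nsmul_eq_mul, smul_eq_mul]
  positivity
end

section
/- Let V : ℝ^d → ℝ be continuous, V ≥ 0, with V(x) ≥ C₀ log|x| for |x| ≥ R₀ where C₀ > 1, R₀ > 1, and suppose ‖D²V(x)‖ ≤ C₀|x|^N for |x| ≥ R₀. Let Z_σ := ∫ e^{-(2/σ²)V} dx and assume Z_σ ≥ Cσ^d for σ ∈ (0,1]. Then for every R ≥ R₀, lim_{σ→0} (1/Z_σ) ∫_{B(0,R)^c} (1 + ‖D²V(x)‖) e^{-(2/σ²)V(x)} dx = 0. -/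
/-!
Outside `B(0, R)` the growth conditions give
`(1 + ‖D²V x‖) e^{-(2/σ²) V x} ≤ (1 + C₀) ‖x‖^{N - 2C₀/σ²}`, and once `2C₀/σ²` exceeds `N + d + 1`
this power is at most `2^{d+1} (1 + ‖x‖)^{-(d+1)} R^{N + d + 1 - 2C₀/σ²}`, whose integral is finite.
Dividing by `Z_σ ≥ C σ^d` leaves a constant times `σ^{-d} R^{-2C₀/σ²} = σ^{-d} e^{-2C₀ log R / σ²}`,
which tends to `0` since `log R > 0`.
-/

open MeasureTheory Filter Topology Real Module Metric

theorem one_add_mul_exp_neg_mul_le_rpow {C₀ r h v t : ℝ} (N : ℕ) (hC₀ : 0 ≤ C₀) (hr : 1 ≤ r)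
    (ht : 0 ≤ t) (hh : h ≤ C₀ * r ^ N) (hv : C₀ * log r ≤ v) :
    (1 + h) * exp (-t * v) ≤ (1 + C₀) * r ^ ((N : ℝ) - t * C₀) := by
  have hr0 : 0 < r := one_pos.trans_le hr
  have hpoly : 1 + h ≤ (1 + C₀) * r ^ N := by nlinarith [one_le_pow₀ (n := N) hr]
  have hexp : exp (-t * v) ≤ r ^ (-t * C₀) := by
    rw [rpow_def_of_pos hr0, exp_le_exp]
    nlinarith
  rw [sub_eq_add_neg, rpow_add hr0, rpow_natCast, ← mul_assoc, neg_mul_eq_neg_mul]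
  exact mul_le_mul hpoly hexp (exp_pos _).le (by positivity)

theorem norm_rpow_neg_le_two_rpow_mul_one_add_norm_rpow {E : Type*} [SeminormedAddCommGroup E]
    {x : E} {s : ℝ} (hx : 1 ≤ ‖x‖) (hs : 0 ≤ s) :
    ‖x‖ ^ (-s) ≤ 2 ^ s * (1 + ‖x‖) ^ (-s) := by
  have h : (1 + ‖x‖) / 2 ≤ ‖x‖ := by linarith
  calc ‖x‖ ^ (-s) ≤ ((1 + ‖x‖) / 2) ^ (-s) :=
        rpow_le_rpow_of_nonpos (by positivity) h (neg_nonpos.mpr hs)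
    _ = 2 ^ s * (1 + ‖x‖) ^ (-s) := by
        rw [div_rpow (by positivity) zero_le_two, rpow_neg zero_le_two, div_eq_mul_inv, inv_inv,
          mul_comm]

section Tail

variable {E : Type*} [NormedAddCommGroup E] [NormedSpace ℝ E] [FiniteDimensional ℝ E]
  [MeasurableSpace E] [BorelSpace E] (μ : Measure E) [μ.IsAddHaarMeasure]

theorem setIntegral_compl_ball_le_of_le_mul_rpow {f : E → ℝ} {A R p : ℝ} (hA : 0 ≤ A)
    (hR : 1 ≤ R) (hp : p + finrank ℝ E + 1 ≤ 0) (hf0 : ∀ x, R ≤ ‖x‖ → 0 ≤ f x)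
    (hf : ∀ x, R ≤ ‖x‖ → f x ≤ A * ‖x‖ ^ p) :
    ∫ x in (ball 0 R)ᶜ, f x ∂μ ≤
      A * 2 ^ ((finrank ℝ E : ℝ) + 1) * (∫ x, (1 + ‖x‖) ^ (-((finrank ℝ E : ℝ) + 1)) ∂μ) *
        R ^ (p + finrank ℝ E + 1) := by
  set s : ℝ := finrank ℝ E + 1
  set g : E → ℝ := fun x ↦ A * 2 ^ s * R ^ (p + s) * (1 + ‖x‖) ^ (-s)
  have hg : Integrable g μ := (integrable_one_add_norm (by simp [s])).const_mul _
  have hfg : ∀ x, R ≤ ‖x‖ → f x ≤ g x := by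
    intro x hxR
    have hx0 : 0 < ‖x‖ := by linarith
    calc f x ≤ A * ‖x‖ ^ p := hf x hxR
      _ = A * (‖x‖ ^ (p + s) * ‖x‖ ^ (-s)) := by rw [← rpow_add hx0]; ring_nf
      _ ≤ A * (R ^ (p + s) * (2 ^ s * (1 + ‖x‖) ^ (-s))) := by
          refine mul_le_mul_of_nonneg_left (mul_le_mul ?_ ?_ (by positivity) (by positivity)) hA
          · exact rpow_le_rpow_of_nonpos (by linarith) hxR (by linarith)
          · exact norm_rpow_neg_le_two_rpow_mul_one_add_norm_rpow (by linarith) (by positivity)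
      _ = g x := by ring
  calc ∫ x in (ball 0 R)ᶜ, f x ∂μ ≤ ∫ x in (ball 0 R)ᶜ, g x ∂μ :=
        setIntegral_mono_of_nonneg (fun x hx ↦ hf0 x (by simpa using hx))
          (fun x hx ↦ hfg x (by simpa using hx)) hg.integrableOn
    _ ≤ ∫ x, g x ∂μ := setIntegral_le_integral hg (Eventually.of_forall fun x ↦ by positivity)
    _ = _ := by rw [integral_const_mul]; simp only [s, add_assoc]; ring

theorem setIntegral_compl_ball_one_add_norm_mul_exp_neg_mul_le {F : Type*}
    [SeminormedAddCommGroup F] {g : E → F} {V : E → ℝ} {C₀ R t : ℝ} (N : ℕ) (hC₀ : 0 ≤ C₀)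
    (hR : 1 ≤ R) (ht : N + finrank ℝ E + 1 ≤ t * C₀)
    (hg : ∀ x, R ≤ ‖x‖ → ‖g x‖ ≤ C₀ * ‖x‖ ^ N) (hV : ∀ x, R ≤ ‖x‖ → C₀ * log ‖x‖ ≤ V x) :
    ∫ x in (ball 0 R)ᶜ, (1 + ‖g x‖) * exp (-t * V x) ∂μ ≤
      (1 + C₀) * 2 ^ ((finrank ℝ E : ℝ) + 1) *
        (∫ x, (1 + ‖x‖) ^ (-((finrank ℝ E : ℝ) + 1)) ∂μ) *
        R ^ ((N : ℝ) - t * C₀ + finrank ℝ E + 1) := by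
  have ht0 : 0 ≤ t := by nlinarith
  exact setIntegral_compl_ball_le_of_le_mul_rpow μ (by positivity) hR (by linarith)
    (fun x _ ↦ by positivity) fun x hx ↦
      one_add_mul_exp_neg_mul_le_rpow N hC₀ (hR.trans hx) ht0 (hg x hx) (hV x hx)

end Tail

theorem tendsto_inv_sq_nhdsGT_zero : Tendsto (fun σ : ℝ ↦ (σ ^ 2)⁻¹) (𝓝[>] 0) atTop :=
  ((tendsto_pow_atTop two_ne_zero).comp tendsto_inv_nhdsGT_zero).congr fun σ ↦ inv_pow σ 2

theorem tendsto_inv_pow_mul_rpow_neg_div_sq (k : ℕ) {a R : ℝ} (ha : 0 < a) (hR : 1 < R) :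
    Tendsto (fun σ : ℝ ↦ (σ ^ k)⁻¹ * R ^ (-a / σ ^ 2)) (𝓝[>] 0) (𝓝 0) := by
  have hlog : 0 < a * log R := mul_pos ha (log_pos hR)
  refine ((tendsto_rpow_mul_exp_neg_mul_atTop_nhds_zero (k / 2) _ hlog).comp
    tendsto_inv_sq_nhdsGT_zero).congr' ?_
  filter_upwards [self_mem_nhdsWithin] with σ (hσ : 0 < σ)
  have hpow : ((σ ^ 2)⁻¹) ^ ((k : ℝ) / 2) = (σ ^ k)⁻¹ := by
    rw [inv_rpow (by positivity), ← rpow_natCast, ← rpow_mul hσ.le, ← rpow_natCast]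
    congr 2
    ring
  rw [Function.comp_apply, hpow, rpow_def_of_pos (one_pos.trans hR)]
  congr 2
  ring

theorem stmt10_general {d : ℕ} (V : EuclideanSpace ℝ (Fin d) → ℝ)
    (C₀ R₀ : ℝ) (hC₀ : 1 < C₀) (hR₀ : 1 < R₀) (N : ℕ)
    (hVlog : ∀ x : EuclideanSpace ℝ (Fin d), R₀ ≤ ‖x‖ → C₀ * Real.log ‖x‖ ≤ V x)
    (hD2 : ∀ x : EuclideanSpace ℝ (Fin d), R₀ ≤ ‖x‖ →
      ‖iteratedFDeriv ℝ 2 V x‖ ≤ C₀ * ‖x‖ ^ N)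
    (Z : ℝ → ℝ)
    (C : ℝ) (hC : 0 < C)
    (hZlow : ∀ σ ∈ Set.Ioc (0 : ℝ) 1, C * σ ^ d ≤ Z σ) :
    ∀ R : ℝ, R₀ ≤ R →
      Tendsto (fun σ : ℝ =>
          (1 / Z σ) * ∫ x in (Metric.ball (0 : EuclideanSpace ℝ (Fin d)) R)ᶜ,
            (1 + ‖iteratedFDeriv ℝ 2 V x‖) * Real.exp (-(2 / σ ^ 2) * V x))
        (nhdsWithin 0 (Set.Ioi 0)) (nhds 0) := by
  intro R hR
  have hR1 : 1 < R := hR₀.trans_le hR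
  set J := ∫ x : EuclideanSpace ℝ (Fin d), (1 + ‖x‖) ^ (-((d : ℝ) + 1))
  set K := (1 + C₀) * 2 ^ ((d : ℝ) + 1) * J * R ^ ((N : ℝ) + d + 1) / C with hK
  have hsmall : ∀ᶠ σ in 𝓝[>] (0 : ℝ), σ ∈ Set.Ioc 0 1 ∧ (N : ℝ) + d + 1 ≤ 2 / σ ^ 2 * C₀ :=
    Eventually.and (Ioc_mem_nhdsGT one_pos)
      (((tendsto_inv_sq_nhdsGT_zero.const_mul_atTop two_pos).atTop_mul_const
        (zero_lt_one.trans hC₀)).eventually_ge_atTop _)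
  refine squeeze_zero' ?_ ?_ (by simpa using
    (tendsto_inv_pow_mul_rpow_neg_div_sq d (by positivity : 0 < 2 * C₀) hR1).const_mul K)
  · filter_upwards [hsmall] with σ ⟨hσ, _⟩
    have hZ0 : 0 < Z σ := lt_of_lt_of_le (by have := hσ.1; positivity) (hZlow σ hσ)
    exact mul_nonneg (by positivity) (integral_nonneg fun x ↦ by positivity)
  · filter_upwards [hsmall] with σ ⟨hσ, hlarge⟩
    have hI := setIntegral_compl_ball_one_add_norm_mul_exp_neg_mul_le volume (t := 2 / σ ^ 2) N
      (by positivity) hR1.le (by rwa [finrank_euclideanSpace_fin])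
      (fun x hx ↦ hD2 x (hR.trans hx)) fun x hx ↦ hVlog x (hR.trans hx)
    rw [finrank_euclideanSpace_fin] at hI
    have hσ0 : 0 < σ := hσ.1
    calc _ ≤ 1 / (C * σ ^ d) * ((1 + C₀) * 2 ^ ((d : ℝ) + 1) * J *
          R ^ ((N : ℝ) - 2 / σ ^ 2 * C₀ + d + 1)) :=
          mul_le_mul (one_div_le_one_div_of_le (by positivity) (hZlow σ hσ)) hI
            (integral_nonneg fun x ↦ by positivity) (by positivity)
      _ = K * ((σ ^ d)⁻¹ * R ^ (-(2 * C₀) / σ ^ 2)) := by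
          rw [show (N : ℝ) - 2 / σ ^ 2 * C₀ + d + 1 = (N + d + 1) + -(2 * C₀) / σ ^ 2 by ring,
            rpow_add (one_pos.trans hR1), hK]
          ring

theorem stmt10 {d : ℕ} (V : EuclideanSpace ℝ (Fin d) → ℝ) (hV : ContDiff ℝ 2 V)
    (hVpos : ∀ x, 0 ≤ V x) (C₀ R₀ : ℝ) (hC₀ : 1 < C₀) (hR₀ : 1 < R₀) (N : ℕ)
    (hVlog : ∀ x : EuclideanSpace ℝ (Fin d), R₀ ≤ ‖x‖ → C₀ * Real.log ‖x‖ ≤ V x)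
    (hD2 : ∀ x : EuclideanSpace ℝ (Fin d), R₀ ≤ ‖x‖ →
      ‖iteratedFDeriv ℝ 2 V x‖ ≤ C₀ * ‖x‖ ^ N)
    (Z : ℝ → ℝ)
    (hZ : ∀ σ : ℝ, Z σ = ∫ x : EuclideanSpace ℝ (Fin d), Real.exp (-(2 / σ ^ 2) * V x))
    (C : ℝ) (hC : 0 < C)
    (hZlow : ∀ σ ∈ Set.Ioc (0 : ℝ) 1, C * σ ^ d ≤ Z σ) :
    ∀ R : ℝ, R₀ ≤ R →
      Tendsto (fun σ : ℝ =>
          (1 / Z σ) * ∫ x in (Metric.ball (0 : EuclideanSpace ℝ (Fin d)) R)ᶜ,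
            (1 + ‖iteratedFDeriv ℝ 2 V x‖) * Real.exp (-(2 / σ ^ 2) * V x))
        (nhdsWithin 0 (Set.Ioi 0)) (nhds 0) :=
  stmt10_general V C₀ R₀ hC₀ hR₀ N hVlog hD2 Z C hC hZlow
end

section
/- Let b : ℝ^d → ℝ^d be locally Lipschitz with (b(x)-b(y), x-y) < 0 for all x ≠ y in the ball B(z, 3R), and such that (b(x)-b(y), x-y) ≤ -c|x-y|² for some c > 0 whenever x,y ∈ B(z,2R) with |x-y| ≥ R/9. Consider the deterministic flow φ_t with forcing chosen so that z is a fixed point (i.e. the solution of dX/dt = b(X) - b(z)). Then: (i) t ↦ |φ_t(x) - z| is non-increasing for x ∈ B(z,R); (ii) if T₀ satisfies e^{-cT₀} ≤ 1/9, then |φ_{T₀}(x) - z| ≤ R/9 for every x ∈ B(z,R); consequently diam(φ_{T₀}(B(z,R))) ≤ 2R/9 ≤ R/4. -/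
/-! The squared distance `f t = ‖φ t x - z‖ ^ 2` has derivative
`2 ⟪φ t x - z, b (φ t x) - b z⟫`. Strict dissipativity makes it negative on the sphere of
radius `R` around the fixed point `z`, so a trajectory started in `B(z, R)` never leaves the
closed ball, and there the distance to `z` is nonincreasing. While the distance is at least
`R / 9`, strong dissipativity gives `f' ≤ -2c f`, so Gronwall's inequality yields decay at rate
`e^{-ct}`; once the distance has dropped below `R / 9`, monotonicity keeps it there. -/

open Set Metric Real

section
variable {E : Type*} [NormedAddCommGroup E] [InnerProductSpace ℝ E] {γ γ' : ℝ → E} {z : E}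

lemma hasDerivAt_norm_sub_sq {v : E} {t : ℝ} (hγ : HasDerivAt γ v t) :
    HasDerivAt (fun s => ‖γ s - z‖ ^ 2) (2 * inner ℝ (γ t - z) v) t :=
  (hγ.sub_const z).norm_sq

lemma norm_sub_le_of_inner_neg_on_sphere (hγ : ∀ t, HasDerivAt γ (γ' t) t) {r : ℝ}
    (h0 : ‖γ 0 - z‖ ≤ r)
    (hsphere : ∀ t, 0 ≤ t → ‖γ t - z‖ = r → inner ℝ (γ t - z) (γ' t) < 0)
    {T : ℝ} (hT : 0 ≤ T) : ‖γ T - z‖ ≤ r := by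
  have hr : 0 ≤ r := (norm_nonneg _).trans h0
  have hsq : ‖γ T - z‖ ^ 2 ≤ r ^ 2 := by
    refine image_le_of_deriv_right_lt_deriv_boundary' (f := fun s => ‖γ s - z‖ ^ 2)
      (B := fun _ => r ^ 2) (B' := fun _ => 0) (b := T)
      (fun s _ => (hasDerivAt_norm_sub_sq (hγ s)).continuousAt.continuousWithinAt)
      (fun s _ => (hasDerivAt_norm_sub_sq (hγ s)).hasDerivWithinAt)
      (pow_le_pow_left₀ (norm_nonneg _) h0 2)
      continuousOn_const (fun _ _ => hasDerivWithinAt_const _ _ _) (fun s hs hsr => ?_)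
      ⟨hT, le_rfl⟩
    have : ‖γ s - z‖ = r := (sq_eq_sq₀ (norm_nonneg _) hr).1 hsr
    linarith [hsphere s hs.1 this]
  exact (sq_le_sq₀ (norm_nonneg _) hr).1 hsq

lemma antitoneOn_norm_sub_of_inner_nonpos (hγ : ∀ t, HasDerivAt γ (γ' t) t) {D : Set ℝ}
    (hD : Convex ℝ D) (hneg : ∀ t ∈ interior D, inner ℝ (γ t - z) (γ' t) ≤ 0) :
    AntitoneOn (fun t => ‖γ t - z‖) D := by
  have hsq : AntitoneOn (fun t => ‖γ t - z‖ ^ 2) D :=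
    antitoneOn_of_hasDerivWithinAt_nonpos hD
      (fun t _ => (hasDerivAt_norm_sub_sq (hγ t)).continuousAt.continuousWithinAt)
      (fun t _ => (hasDerivAt_norm_sub_sq (hγ t)).hasDerivWithinAt)
      (fun t ht => by linarith [hneg t ht])
  exact fun s hs t ht hst => (sq_le_sq₀ (norm_nonneg _) (norm_nonneg _)).1 (hsq hs ht hst)

lemma norm_sub_le_exp_mul_of_inner_le (hγ : ∀ t, HasDerivAt γ (γ' t) t) {c T : ℝ}
    (hT : 0 ≤ T)
    (hdecay : ∀ t ∈ Ico 0 T, inner ℝ (γ t - z) (γ' t) ≤ -c * ‖γ t - z‖ ^ 2) :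
    ‖γ T - z‖ ≤ exp (-c * T) * ‖γ 0 - z‖ := by
  have hsq : ‖γ T - z‖ ^ 2 ≤ ‖γ 0 - z‖ ^ 2 * exp (-2 * c * T) := by
    have := le_gronwallBound_of_liminf_deriv_right_le (f := fun s => ‖γ s - z‖ ^ 2)
      (K := -2 * c) (ε := 0)
      (fun s _ => (hasDerivAt_norm_sub_sq (hγ s)).continuousAt.continuousWithinAt)
      (fun s _ _ hr => (hasDerivAt_norm_sub_sq (hγ s)).hasDerivWithinAt.liminf_right_slope_le hr)
      le_rfl (fun s hs => by linarith [hdecay s hs]) T ⟨hT, le_rfl⟩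
    simpa only [sub_zero, gronwallBound_ε0, mul_assoc] using this
  refine (sq_le_sq₀ (norm_nonneg _) (by positivity)).1 (hsq.trans_eq ?_)
  rw [mul_pow, ← exp_nat_mul]
  ring_nf

lemma norm_sub_le_max_of_inner_le_outside_ball (hγ : ∀ t, HasDerivAt γ (γ' t) t)
    {ρ c T : ℝ} (hT : 0 ≤ T) (hanti : AntitoneOn (fun t => ‖γ t - z‖) (Icc 0 T))
    (hdecay : ∀ t ∈ Ico 0 T, ρ ≤ ‖γ t - z‖ →
      inner ℝ (γ t - z) (γ' t) ≤ -c * ‖γ t - z‖ ^ 2) :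
    ‖γ T - z‖ ≤ max ρ (exp (-c * T) * ‖γ 0 - z‖) := by
  by_cases hρ : ‖γ T - z‖ ≤ ρ
  · exact le_max_of_le_left hρ
  refine le_max_of_le_right (norm_sub_le_exp_mul_of_inner_le hγ hT fun t ht => hdecay t ht ?_)
  exact (not_le.1 hρ).le.trans (hanti ⟨ht.1, ht.2.le⟩ ⟨hT, le_rfl⟩ ht.2.le)

lemma norm_sub_le_of_dissipative_on_closedBall {b : E → E} {R T : ℝ} (hR : 0 < R)
    (hγ : ∀ t, HasDerivAt γ (b (γ t) - b z) t)
    (hb : ∀ y ∈ closedBall z R, y ≠ z → inner ℝ (b y - b z) (y - z) < 0)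
    (h0 : ‖γ 0 - z‖ ≤ R) (hT : 0 ≤ T) : ‖γ T - z‖ ≤ R := by
  refine norm_sub_le_of_inner_neg_on_sphere hγ h0 (fun t _ ht => ?_) hT
  rw [real_inner_comm]
  exact hb _ (mem_closedBall_iff_norm.2 ht.le) fun h => hR.ne' (by simpa [h] using ht.symm)

lemma antitoneOn_norm_sub_of_dissipative_on_closedBall {b : E → E} {R : ℝ} (hR : 0 < R)
    (hγ : ∀ t, HasDerivAt γ (b (γ t) - b z) t)
    (hb : ∀ y ∈ closedBall z R, y ≠ z → inner ℝ (b y - b z) (y - z) < 0)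
    (h0 : ‖γ 0 - z‖ ≤ R) : AntitoneOn (fun t => ‖γ t - z‖) (Ici 0) := by
  refine antitoneOn_norm_sub_of_inner_nonpos hγ (convex_Ici 0) fun t ht => ?_
  rw [interior_Ici] at ht
  rcases eq_or_ne (γ t) z with h | h
  · simp [h]
  rw [real_inner_comm]
  exact (hb _ (mem_closedBall_iff_norm.2
    (norm_sub_le_of_dissipative_on_closedBall hR hγ hb h0 ht.le)) h).le

end

theorem stmt12_general {d : ℕ} (b : EuclideanSpace ℝ (Fin d) → EuclideanSpace ℝ (Fin d))
    (z : EuclideanSpace ℝ (Fin d)) (R c : ℝ)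
    (hR : 0 < R)
    (hmon : ∀ x ∈ Metric.ball z (3 * R), ∀ y ∈ Metric.ball z (3 * R), x ≠ y →
      (inner ℝ (b x - b y) (x - y) : ℝ) < 0)
    (hmon' : ∀ x ∈ Metric.ball z (2 * R), ∀ y ∈ Metric.ball z (2 * R),
      R / 9 ≤ ‖x - y‖ → (inner ℝ (b x - b y) (x - y) : ℝ) ≤ -c * ‖x - y‖ ^ 2)
    (φ : ℝ → EuclideanSpace ℝ (Fin d) → EuclideanSpace ℝ (Fin d))
    (hφ0 : ∀ x, φ 0 x = x)
    (hode : ∀ (x : EuclideanSpace ℝ (Fin d)) (t : ℝ),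
      HasDerivAt (fun s => φ s x) (b (φ t x) - b z) t) :
    (∀ x ∈ Metric.ball z R, AntitoneOn (fun t => ‖φ t x - z‖) (Set.Ici (0 : ℝ))) ∧
      ∀ T₀ : ℝ, 0 ≤ T₀ → Real.exp (-c * T₀) ≤ 1 / 9 →
        (∀ x ∈ Metric.ball z R, ‖φ T₀ x - z‖ ≤ R / 9) ∧
          Metric.diam (φ T₀ '' Metric.ball z R) ≤ R / 4 := by
  have hdissip : ∀ y ∈ closedBall z R, y ≠ z → inner ℝ (b y - b z) (y - z) < 0 :=
    fun y hy => hmon y (closedBall_subset_ball (by linarith) hy) z (mem_ball_self (by positivity))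
  have hstart : ∀ x ∈ ball z R, ‖φ 0 x - z‖ ≤ R := fun x hx => by
    rw [hφ0, ← dist_eq_norm]; exact hx.le
  have hanti : ∀ x ∈ ball z R, AntitoneOn (fun t => ‖φ t x - z‖) (Ici 0) := fun x hx =>
    antitoneOn_norm_sub_of_dissipative_on_closedBall hR (hode x) hdissip (hstart x hx)
  have hsmall : ∀ T₀ : ℝ, 0 ≤ T₀ → exp (-c * T₀) ≤ 1 / 9 →
      ∀ x ∈ ball z R, ‖φ T₀ x - z‖ ≤ R / 9 := by
    intro T₀ hT₀ hexp x hx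
    have hdecay : ∀ t ∈ Ico 0 T₀, R / 9 ≤ ‖φ t x - z‖ →
        inner ℝ (φ t x - z) (b (φ t x) - b z) ≤ -c * ‖φ t x - z‖ ^ 2 := by
      intro t ht hρ
      have hstay := norm_sub_le_of_dissipative_on_closedBall hR (hode x) hdissip (hstart x hx) ht.1
      rw [real_inner_comm]
      exact hmon' _ (mem_ball_iff_norm.2 (by linarith)) z (mem_ball_self (by positivity)) hρ
    refine (norm_sub_le_max_of_inner_le_outside_ball (hode x) hT₀
      ((hanti x hx).mono Icc_subset_Ici_self) hdecay).trans (max_le le_rfl ?_)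
    rw [hφ0, ← dist_eq_norm]
    nlinarith [mem_ball.1 hx, exp_pos (-c * T₀), dist_nonneg (x := x) (y := z)]
  refine ⟨hanti, fun T₀ hT₀ hexp => ⟨hsmall T₀ hT₀ hexp, ?_⟩⟩
  have himage : φ T₀ '' ball z R ⊆ closedBall z (R / 9) := by
    rintro _ ⟨x, hx, rfl⟩
    exact mem_closedBall_iff_norm.2 (hsmall T₀ hT₀ hexp x hx)
  calc diam (φ T₀ '' ball z R) ≤ diam (closedBall z (R / 9)) :=
        diam_mono himage isBounded_closedBall
    _ ≤ 2 * (R / 9) := diam_closedBall (by positivity)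
    _ ≤ R / 4 := by linarith

theorem stmt12 {d : ℕ} (b : EuclideanSpace ℝ (Fin d) → EuclideanSpace ℝ (Fin d))
    (hb : LocallyLipschitz b) (z : EuclideanSpace ℝ (Fin d)) (R c : ℝ)
    (hR : 0 < R) (hc : 0 < c)
    (hmon : ∀ x ∈ Metric.ball z (3 * R), ∀ y ∈ Metric.ball z (3 * R), x ≠ y →
      (inner ℝ (b x - b y) (x - y) : ℝ) < 0)
    (hmon' : ∀ x ∈ Metric.ball z (2 * R), ∀ y ∈ Metric.ball z (2 * R),
      R / 9 ≤ ‖x - y‖ → (inner ℝ (b x - b y) (x - y) : ℝ) ≤ -c * ‖x - y‖ ^ 2)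
    (φ : ℝ → EuclideanSpace ℝ (Fin d) → EuclideanSpace ℝ (Fin d))
    (hφ0 : ∀ x, φ 0 x = x)
    (hode : ∀ (x : EuclideanSpace ℝ (Fin d)) (t : ℝ),
      HasDerivAt (fun s => φ s x) (b (φ t x) - b z) t) :
    (∀ x ∈ Metric.ball z R, AntitoneOn (fun t => ‖φ t x - z‖) (Set.Ici (0 : ℝ))) ∧
      ∀ T₀ : ℝ, 0 ≤ T₀ → Real.exp (-c * T₀) ≤ 1 / 9 →
        (∀ x ∈ Metric.ball z R, ‖φ T₀ x - z‖ ≤ R / 9) ∧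
          Metric.diam (φ T₀ '' Metric.ball z R) ≤ R / 4 :=
  stmt12_general b z R c hR hmon hmon' φ hφ0 hode
end
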